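/- arXiv:2408.02401 — 2 statements merged into one kernel-verified Lean document; each statement's English description precedes it below -/
import Mathlib

section
/- Let $X$ be a random variable on a probability space with distribution determined by a measure $F$, let $F^*$ be another probability measure with $F \ll F^*$, let $h$ be measurable, $Y = h(X)$, and let $G$ denote the distribution function of $Y$ under $F$. Fix $u \in (0,1)$ and suppose $G$ is continuous at the quantile $q_Y(u)$ (so that $G(q_Y(u)) = u$). Then $\mathsf{E}_{F^*}\big[ (dF/dF^*)(X)^2 \, \mathbf{1}_{\{h(X) > q_Y(u)\}} \big] \ge (1-u)^2$. -/
/-!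
Every `y < q` has `G y < u`, so left-continuity of `G` at `q` gives `G q ≤ u` and the tail event
`{h > q}` has `F`-mass at least `1 - u`. That mass is the `F*`-integral of `dF/dF*` over the event,
and Cauchy–Schwarz against its indicator, whose `F*`-mass is at most `1`, bounds its square by the
restricted second moment.
-/

open MeasureTheory Filter Topology ProbabilityTheory
open scoped ENNReal

theorem ENNReal.sq_lintegral_le_measure_univ_mul_lintegral_sq {α : Type*} [MeasurableSpace α]
    (μ : Measure α) {f : α → ℝ≥0∞} (hf : AEMeasurable f μ) :
    (∫⁻ x, f x ∂μ) ^ 2 ≤ μ Set.univ * ∫⁻ x, f x ^ 2 ∂μ := by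
  have hHolder := ENNReal.lintegral_mul_le_Lp_mul_Lq μ Real.HolderConjugate.two_two hf
    (aemeasurable_const (b := (1 : ℝ≥0∞)))
  simp only [Pi.mul_apply, mul_one, lintegral_const, one_pow, one_mul, ENNReal.rpow_two] at hHolder
  calc (∫⁻ x, f x ∂μ) ^ 2
      ≤ ((∫⁻ x, f x ^ 2 ∂μ) ^ (1 / 2 : ℝ) * μ Set.univ ^ (1 / 2 : ℝ)) ^ 2 := by gcongr
    _ = μ Set.univ * ∫⁻ x, f x ^ 2 ∂μ := by
      rw [mul_pow, ← ENNReal.rpow_two, ← ENNReal.rpow_two, ← ENNReal.rpow_mul, ← ENNReal.rpow_mul]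
      norm_num [mul_comm]

noncomputable def lowerQuantile (G : ℝ → ℝ) (u : ℝ) : ℝ := sInf {y | u ≤ G y}

theorem apply_lowerQuantile_le {G : ℝ → ℝ} {u : ℝ} (hG : Tendsto G atBot (𝓝 0)) (hu : 0 < u)
    (hcont : ContinuousAt G (lowerQuantile G u)) : G (lowerQuantile G u) ≤ u := by
  have hbdd : BddBelow {y | u ≤ G y} := by
    obtain ⟨a, ha⟩ := eventually_atBot.mp (hG.eventually (gt_mem_nhds hu))
    exact ⟨a, fun z hz => le_of_not_gt fun hza => (ha z hza.le).not_ge hz⟩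
  have hbelow : ∀ y < lowerQuantile G u, G y ≤ u := fun y hy =>
    (not_le.mp (notMem_of_lt_csInf (s := {y | u ≤ G y}) hy hbdd)).le
  exact le_of_tendsto (hcont.tendsto.mono_left nhdsWithin_le_nhds : Tendsto G (𝓝[<] _) _)
    (eventually_nhdsWithin_of_forall hbelow)

theorem stmt_1 {E : Type*} [MeasurableSpace E]
    (F Fstar : Measure E) [IsProbabilityMeasure F] [IsProbabilityMeasure Fstar]
    (hac : F ≪ Fstar) (h : E → ℝ) (hmeas : Measurable h)
    (G : ℝ → ℝ) (hG : ∀ y, G y = (F {x | h x ≤ y}).toReal)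
    (u : ℝ) (hu : u ∈ Set.Ioo (0:ℝ) 1)
    (q : ℝ) (hq : q = sInf {y : ℝ | u ≤ G y})
    (hcont : ContinuousAt G q) :
    ENNReal.ofReal ((1 - u) ^ 2) ≤
      ∫⁻ x in {x | q < h x}, (F.rnDeriv Fstar x) ^ 2 ∂Fstar := by
  obtain ⟨hu0, hu1⟩ := hu
  have : IsProbabilityMeasure (F.map h) := Measure.isProbabilityMeasure_map hmeas.aemeasurable
  have hG_cdf : G = cdf (F.map h) := funext fun y => by
    rw [hG, cdf_eq_real, measureReal_def, Measure.map_apply hmeas measurableSet_Iic]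
    rfl
  have hGq : G q ≤ u := by
    subst hq
    exact apply_lowerQuantile_le (hG_cdf ▸ tendsto_cdf_atBot _) hu0 hcont
  have htail : ENNReal.ofReal (1 - u) ≤ F {x | q < h x} := by
    have hcompl : {x | q < h x} = {x | h x ≤ q}ᶜ := by ext; simp
    have hmeas_le : MeasurableSet {x | h x ≤ q} := hmeas measurableSet_Iic
    rw [hcompl, prob_compl_eq_one_sub hmeas_le, ENNReal.ofReal_sub _ hu0.le,
      ENNReal.ofReal_one, ← ENNReal.ofReal_toReal (measure_ne_top F {x | h x ≤ q}), ← hG]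
    exact tsub_le_tsub_left (ENNReal.ofReal_le_ofReal hGq) 1
  calc ENNReal.ofReal ((1 - u) ^ 2) = ENNReal.ofReal (1 - u) ^ 2 := ENNReal.ofReal_pow (by linarith) _
    _ ≤ (∫⁻ x in {x | q < h x}, F.rnDeriv Fstar x ∂Fstar) ^ 2 := by
      rw [Measure.setLIntegral_rnDeriv hac]; gcongr
    _ ≤ Fstar {x | q < h x} * ∫⁻ x in {x | q < h x}, F.rnDeriv Fstar x ^ 2 ∂Fstar := by
      simpa using ENNReal.sq_lintegral_le_measure_univ_mul_lintegral_sq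
        (Fstar.restrict {x | q < h x}) (Measure.measurable_rnDeriv F Fstar).aemeasurable
    _ ≤ ∫⁻ x in {x | q < h x}, F.rnDeriv Fstar x ^ 2 ∂Fstar := mul_le_of_le_one_left' prob_le_one
end

section
/- Let $X$ be a bounded random variable, $n \in \mathbb{N}$, and let $X_1,\dots,X_n$ be independent copies of $X$. Then the distortion risk measure with distortion function $g(u) = 1-(1-u)^n$ satisfies $\rho_g(X) = \mathsf{E}[\max\{X_1,\dots,X_n\}]$. -/
open MeasureTheory

noncomputable def distortionRM {Ω : Type*} [MeasurableSpace Ω]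
    (P : Measure Ω) (g : ℝ → ℝ) (X : Ω → ℝ) : ℝ :=
  (∫ x in Set.Iic (0:ℝ), (g ((P {ω | x < X ω}).toReal) - 1)) +
  ∫ x in Set.Ioi (0:ℝ), g ((P {ω | x < X ω}).toReal)

/-!
For independent copies `X₁, …, Xₙ` of `X`, independence gives
`P(max Xᵢ ≤ x) = P(X ≤ x)ⁿ`, i.e. `P(max Xᵢ > x) = g (P(X > x))`. So `ρ_g(X)` is the signed
layer-cake integral of the tail function of `max Xᵢ`, which equals its expectation: split
`Y = Y⁺ - Y⁻` and apply the nonnegative layer-cake formula to each part, reflecting `t ↦ -t`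
for the negative part.
-/

open ProbabilityTheory Set

theorem MeasureTheory.probReal_lt_eq_one_sub_probReal_le {α : Type*} [MeasurableSpace α]
    {P : Measure α} [IsProbabilityMeasure P] {f : α → ℝ} (hf : AEMeasurable f P) (t : ℝ) :
    P.real {a | t < f a} = 1 - P.real {a | f a ≤ t} := by
  have h_lt : {a | t < f a} = {a | f a ≤ t}ᶜ := by ext; simp
  rw [h_lt, probReal_compl_eq_one_sub₀ (nullMeasurableSet_le hf aemeasurable_const)]

theorem MeasureTheory.Integrable.integral_eq_integral_meas_lt_sub_integral_meas_le
    {α : Type*} [MeasurableSpace α] {μ : Measure α} {f : α → ℝ} (hf : Integrable f μ) :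
    ∫ a, f a ∂μ = (∫ t in Ioi 0, μ.real {a | t < f a}) - ∫ t in Iic 0, μ.real {a | f a ≤ t} := by
  have h_pos : ∫ a, max (f a) 0 ∂μ = ∫ t in Ioi 0, μ.real {a | t < f a} := by
    rw [hf.pos_part.integral_eq_integral_meas_lt (ae_of_all _ fun _ => le_max_right _ _)]
    refine setIntegral_congr_fun measurableSet_Ioi fun t (ht : 0 < t) => ?_
    simp [ht.not_gt]
  have h_neg : ∫ a, max (-f a) 0 ∂μ = ∫ t in Iic 0, μ.real {a | f a ≤ t} := by
    have h_refl := integral_comp_neg_Ioi 0 fun t => μ.real {a | f a ≤ t}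
    rw [neg_zero] at h_refl
    rw [hf.neg_part.integral_eq_integral_meas_le (ae_of_all _ fun _ => le_max_right _ _), ← h_refl]
    refine setIntegral_congr_fun measurableSet_Ioi fun t (ht : 0 < t) => ?_
    simp [ht.not_ge, le_neg]
  rw [← h_pos, ← h_neg, ← integral_sub hf.pos_part hf.neg_part]
  simp only [max_zero_sub_max_neg_zero_eq_self]

theorem MeasureTheory.Integrable.integral_eq_integral_Iic_add_integral_Ioi
    {α : Type*} [MeasurableSpace α] {P : Measure α} [IsProbabilityMeasure P] {f : α → ℝ}
    (hf : Integrable f P) :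
    ∫ a, f a ∂P =
      (∫ t in Iic 0, (P.real {a | t < f a} - 1)) + ∫ t in Ioi 0, P.real {a | t < f a} := by
  have h_compl (t : ℝ) : P.real {a | t < f a} - 1 = -P.real {a | f a ≤ t} := by
    rw [probReal_lt_eq_one_sub_probReal_le hf.aemeasurable]
    ring
  simp only [h_compl, integral_neg]
  rw [hf.integral_eq_integral_meas_lt_sub_integral_meas_le]
  ring

theorem Finset.integrable_sup' {α ι : Type*} [MeasurableSpace α] {μ : Measure α}
    {s : Finset ι} (hs : s.Nonempty) {f : ι → α → ℝ} (hf : ∀ i ∈ s, Integrable (f i) μ) :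
    Integrable (s.sup' hs f) μ :=
  Finset.sup'_induction (p := fun g => Integrable g μ) hs f (fun _ hg _ hh => hg.sup hh) hf

namespace ProbabilityTheory.iIndepFun

variable {Ω ι : Type*} [MeasurableSpace Ω] {P : Measure Ω} [Fintype ι]
  {Xs : ι → Ω → ℝ} {X : Ω → ℝ}

theorem measureReal_sup'_le (hindep : iIndepFun Xs P) (hident : ∀ i, IdentDistrib (Xs i) X P P)
    (hne : (Finset.univ : Finset ι).Nonempty) (x : ℝ) :
    P.real {ω | Finset.univ.sup' hne Xs ω ≤ x} = P.real {ω | X ω ≤ x} ^ Fintype.card ι := by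
  have h_inter : {ω | Finset.univ.sup' hne Xs ω ≤ x} = ⋂ i, Xs i ⁻¹' Iic x := by
    ext ω
    simp [Finset.sup'_le_iff]
  rw [h_inter, measureReal_def, hindep.meas_iInter fun i => ⟨Iic x, measurableSet_Iic, rfl⟩]
  simp_rw [(hident _).measure_mem_eq measurableSet_Iic]
  rw [Finset.prod_const, Finset.card_univ, ENNReal.toReal_pow]
  rfl

theorem measureReal_lt_sup' [IsProbabilityMeasure P] (hindep : iIndepFun Xs P)
    (hXs : ∀ i, Measurable (Xs i))
    (hident : ∀ i, IdentDistrib (Xs i) X P P) (hne : (Finset.univ : Finset ι).Nonempty) (x : ℝ) :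
    P.real {ω | x < Finset.univ.sup' hne Xs ω} =
      1 - (1 - P.real {ω | x < X ω}) ^ Fintype.card ι := by
  obtain ⟨i₀, -⟩ := id hne
  have hM : Measurable (Finset.univ.sup' hne Xs) := Finset.measurable_sup' hne fun i _ => hXs i
  rw [probReal_lt_eq_one_sub_probReal_le hM.aemeasurable, hindep.measureReal_sup'_le hident,
    probReal_lt_eq_one_sub_probReal_le (hident i₀).aemeasurable_snd, sub_sub_cancel]

end ProbabilityTheory.iIndepFun

theorem stmt_11 {Ω : Type*} [MeasurableSpace Ω] (P : Measure Ω) [IsProbabilityMeasure P]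
    (n : ℕ) (hn : 0 < n)
    (X : Ω → ℝ) (hX : Measurable X) (hXb : ∃ C, ∀ ω, |X ω| ≤ C)
    (Xs : Fin n → Ω → ℝ) (hXs : ∀ i, Measurable (Xs i))
    (hindep : ProbabilityTheory.iIndepFun Xs P)
    (hident : ∀ i, Measure.map (Xs i) P = Measure.map X P)
    (g : ℝ → ℝ) (hg : ∀ u, g u = 1 - (1 - u) ^ n) :
    distortionRM P g X =
      ∫ ω, (Finset.univ.sup' (Finset.univ_nonempty_iff.mpr ⟨⟨0, hn⟩⟩) fun i => Xs i ω) ∂P := by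
  set hne : (Finset.univ : Finset (Fin n)).Nonempty := Finset.univ_nonempty_iff.mpr ⟨⟨0, hn⟩⟩
  have h_ident (i : Fin n) : IdentDistrib (Xs i) X P P :=
    ⟨(hXs i).aemeasurable, hX.aemeasurable, hident i⟩
  obtain ⟨C, hC⟩ := hXb
  have hX_int : Integrable X P := .of_bound hX.aestronglyMeasurable C (ae_of_all _ hC)
  have hM_int : Integrable (Finset.univ.sup' hne Xs) P :=
    Finset.integrable_sup' hne fun i _ => (h_ident i).integrable_iff.mpr hX_int
  simp only [← Finset.sup'_apply, hM_int.integral_eq_integral_Iic_add_integral_Ioi,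
    hindep.measureReal_lt_sup' hXs h_ident, Fintype.card_fin, distortionRM, hg, measureReal_def]
end
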